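/- arXiv:2107.02219 — 3 statements merged into one kernel-verified Lean document; each statement's English description precedes it below -/
import Mathlib

section
/- If f is an S_n-invariant Laurent polynomial in x_1,...,x_n (n ≥ 2) such that f|_{x_{n-1}=t, x_n=-t} = 0 identically, then f is divisible by the product ∏_{i<j} (x_i + x_j) in the ring of Laurent polynomials. -/
/-- Laurent polynomials in `n` variables over `ℚ`. -/
abbrev LP (n : ℕ) : Type := AddMonoidAlgebra ℚ (Fin n →₀ ℤ)

/-- Evaluation of a Laurent polynomial at a point with invertible coordinates. -/
noncomputable def lpEval {n : ℕ} (x : Fin n → ℚˣ) (f : LP n) : ℚ :=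
  Finsupp.sum f.coeff fun d c => c * ∏ i, ((x i ^ (d i) : ℚˣ) : ℚ)

/-- `f` is symmetric (invariant under the `Sₙ`-action permuting the variables). -/
def IsSymmLP {n : ℕ} (f : LP n) : Prop :=
  ∀ (σ : Equiv.Perm (Fin n)) (x : Fin n → ℚˣ), lpEval (x ∘ σ) f = lpEval x f

/-- The point obtained by substituting `x i = t`, `x j = -t`, others given by `y`. -/
def substPair {n : ℕ} (i j : Fin n) (t : ℚˣ) (y : Fin n → ℚˣ) : Fin n → ℚˣ :=
  fun k => if k = i then t else if k = j then -t else y k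

/-- The variable `xᵢ` as a Laurent polynomial. -/
noncomputable def Xv {n : ℕ} (i : Fin n) : LP n :=
  AddMonoidAlgebra.single (Finsupp.single i (1 : ℤ)) (1 : ℚ)

/-
For `i ≠ j` let `ε = substNeg i j` be the substitution `x_j ↦ -x_i`. Since `x_j ≡ -x_i` modulo
`x_i + x_j`, every `g` satisfies `x_i + x_j ∣ g - ε g`. Evaluating `ε f` at a point amounts to
evaluating `f` at a point with `x_i = t`, `x_j = -t`, which by symmetry of `f` is a permutation of a
point with `x_{n-1} = t`, `x_n = -t`; so `ε f` vanishes everywhere, hence is zero by Dedekind's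
independence of the characters `x ↦ x^d`. Dividing by the factors one at a time, the quotient is
again killed by each remaining `ε`, because `ε` maps into a domain and does not kill `x_a + x_b`
for `{a, b} ≠ {i, j}`.
-/

namespace LP

variable {n : ℕ}

noncomputable def Xunit (i : Fin n) : (LP n)ˣ :=
  (AddMonoidAlgebra.of ℚ (Fin n →₀ ℤ)).toHomUnits (.ofAdd (Finsupp.single i 1))

@[simp]
theorem val_Xunit (i : Fin n) : (Xunit i : LP n) = Xv i := rfl

section aeval

variable {A : Type*} [CommRing A] [Algebra ℚ A]

noncomputable def monomialHom (u : Fin n → Aˣ) : Multiplicative (Fin n →₀ ℤ) →* A where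
  toFun d := ∏ i, ((u i ^ d.toAdd i : Aˣ) : A)
  map_one' := by simp
  map_mul' d e := by
    simp only [toAdd_mul, Finsupp.add_apply, zpow_add, Units.val_mul, Finset.prod_mul_distrib]

noncomputable def aeval (u : Fin n → Aˣ) : LP n →ₐ[ℚ] A :=
  AddMonoidAlgebra.lift ℚ A (Fin n →₀ ℤ) (monomialHom u)

@[simp]
theorem aeval_Xv (u : Fin n → Aˣ) (i : Fin n) : aeval u (Xv i) = u i := by
  simp [aeval, Xv, monomialHom, Finsupp.single_apply, apply_ite Units.val]

theorem algHom_ext {φ ψ : LP n →ₐ[ℚ] A} (h : ∀ i, φ (Xv i) = ψ (Xv i)) : φ = ψ := by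
  refine (AddMonoidAlgebra.lift ℚ A (Fin n →₀ ℤ)).symm.injective
    (Finsupp.mulHom_ext fun i m => ?_)
  let restrict (χ : LP n →ₐ[ℚ] A) : Multiplicative ℤ →* A :=
    ((AddMonoidAlgebra.lift ℚ A _).symm χ).comp
      (AddMonoidHom.toMultiplicative (Finsupp.singleAddHom i))
  exact DFunLike.congr_fun (MonoidHom.ext_mint (f := restrict φ) (g := restrict ψ) (h i)) (.ofAdd m)

theorem comp_aeval {B : Type*} [CommRing B] [Algebra ℚ B] (φ : A →ₐ[ℚ] B) (u : Fin n → Aˣ) :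
    φ.comp (aeval u) = aeval fun i => Units.map φ (u i) :=
  algHom_ext fun i => by simp

theorem aeval_Xunit : aeval Xunit = AlgHom.id ℚ (LP n) :=
  algHom_ext fun i => by simp

end aeval

theorem lpEval_eq_aeval (x : Fin n → ℚˣ) (f : LP n) : lpEval x f = aeval x f := by
  simp [lpEval, aeval, AddMonoidAlgebra.lift_apply, monomialHom]

noncomputable def monomialChar (d : Fin n →₀ ℤ) : (Fin n → ℚˣ) →* ℚ where
  toFun x := monomialHom x (.ofAdd d)
  map_one' := by simp [monomialHom]
  map_mul' x y := by simp [monomialHom, mul_zpow, Finset.prod_mul_distrib]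

theorem monomialChar_injective : Function.Injective (monomialChar (n := n)) := by
  intro d e h
  ext i
  have h2 := DFunLike.congr_fun h (Pi.mulSingle i (Units.mk0 2 two_ne_zero))
  simpa [monomialChar, monomialHom, Pi.mulSingle_apply, apply_ite] using h2

theorem eq_zero_of_forall_lpEval_eq_zero {f : LP n} (h : ∀ x, lpEval x f = 0) : f = 0 := by
  have li := (linearIndependent_monoidHom (Fin n → ℚˣ) ℚ).comp _ monomialChar_injective
  refine AddMonoidAlgebra.coeff_injective (linearIndependent_iff.mp li f.coeff ?_)
  funext x
  rw [Finsupp.linearCombination_apply, Finsupp.sum_apply']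
  simpa [monomialChar, lpEval_eq_aeval, aeval, AddMonoidAlgebra.lift_apply] using h x

noncomputable def substNeg (i j : Fin n) : LP n →ₐ[ℚ] LP n :=
  aeval (Function.update Xunit j (-Xunit i))

theorem dvd_sub_substNeg (i j : Fin n) (g : LP n) : Xv i + Xv j ∣ g - substNeg i j g := by
  let q := Ideal.Quotient.mkₐ ℚ (Ideal.span {Xv i + Xv j})
  have hq : q.comp (substNeg i j) = q := by
    conv_rhs => rw [← q.comp_id, ← aeval_Xunit]
    rw [substNeg, comp_aeval, comp_aeval]
    congr 1
    funext k
    rcases eq_or_ne k j with rfl | hk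
    · ext
      simp only [q, Ideal.Quotient.mkₐ_eq_mk, Units.coe_map, Function.update_self, Units.val_neg,
        MonoidHom.coe_coe, val_Xunit, Ideal.Quotient.eq]
      exact Ideal.mem_span_singleton.mpr ⟨-1, by ring⟩
    · simp [hk]
  rw [← Ideal.mem_span_singleton, ← Ideal.Quotient.eq]
  exact (DFunLike.congr_fun hq g).symm

theorem dvd_of_substNeg_eq_zero {i j : Fin n} {g : LP n} (h : substNeg i j g = 0) :
    Xv i + Xv j ∣ g := by
  simpa [h] using dvd_sub_substNeg i j g

theorem lpEval_substNeg {i j : Fin n} (hij : i ≠ j) (x : Fin n → ℚˣ) (g : LP n) :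
    lpEval x (substNeg i j g) = lpEval (substPair i j (x i) x) g := by
  rw [lpEval_eq_aeval, lpEval_eq_aeval, ← AlgHom.comp_apply, substNeg, comp_aeval]
  congr 2
  funext k
  ext
  rcases eq_or_ne k j with rfl | hkj
  · simp [substPair, hij.symm]
  rcases eq_or_ne k i with rfl | hki
  · simp [substPair, hkj]
  · simp [substPair, hki, hkj]

theorem substPair_comp_perm (σ : Equiv.Perm (Fin n)) (i j : Fin n) (t : ℚˣ) (y : Fin n → ℚˣ) :
    substPair (σ i) (σ j) t y ∘ σ = substPair i j t (y ∘ σ) := by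
  funext k
  simp [substPair, σ.injective.eq_iff]

theorem substNeg_eq_zero_of_isSymmLP {f : LP n} (hsymm : IsSymmLP f) {a b : Fin n} (hab : a ≠ b)
    (hzero : ∀ t y, lpEval (substPair a b t y) f = 0) {i j : Fin n} (hij : i ≠ j) :
    substNeg i j f = 0 := by
  obtain ⟨σ, hσi, hσj⟩ := MulAction.is_two_pretransitive_iff.mp
    (Equiv.Perm.isMultiplyPretransitive (Fin n) 2) hij hab
  refine eq_zero_of_forall_lpEval_eq_zero fun x => ?_
  have hx : substPair i j (x i) x = substPair a b (x i) (x ∘ σ.symm) ∘ σ := by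
    rw [← hσi, ← hσj, Equiv.Perm.smul_def, Equiv.Perm.smul_def, substPair_comp_perm,
      Function.comp_assoc, Equiv.symm_comp_self, Function.comp_id]
  rw [lpEval_substNeg hij, hx, hsymm, hzero]

theorem substNeg_Xv_add_Xv_ne_zero {a b i j : Fin n} (hab : a < b) (hij : i < j)
    (hne : (a, b) ≠ (i, j)) : substNeg i j (Xv a + Xv b) ≠ 0 := by
  intro h
  -- at `x_i = 2`, `x_j = -2`, `x_k = 1` otherwise, `x_a + x_b` vanishes only for `{a, b} = {i, j}`
  have := congrArg (lpEval (Pi.mulSingle i (Units.mk0 2 two_ne_zero))) h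
  rw [lpEval_substNeg hij.ne, lpEval_eq_aeval, lpEval_eq_aeval, map_add, map_zero, aeval_Xv,
    aeval_Xv] at this
  simp only [substPair, Pi.mulSingle_apply, apply_ite Units.val, Units.val_mk0, Units.val_neg,
    Units.val_one] at this
  split_ifs at this <;> subst_vars <;>
    first | exact hne rfl | exact lt_asymm hab hij | norm_num at this

theorem prod_dvd_of_substNeg_eq_zero {f : LP n} (s : Finset (Fin n × Fin n))
    (hlt : ∀ p ∈ s, p.1 < p.2) (hf : ∀ p ∈ s, substNeg p.1 p.2 f = 0) :
    ∏ p ∈ s, (Xv p.1 + Xv p.2) ∣ f := by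
  induction s using Finset.induction_on generalizing f with
  | empty => simp
  | @insert p s hps ih =>
    obtain ⟨q, rfl⟩ := dvd_of_substNeg_eq_zero (hf p (Finset.mem_insert_self p s))
    rw [Finset.prod_insert hps]
    refine mul_dvd_mul_left _ (ih (fun r hr => hlt r (Finset.mem_insert_of_mem hr)) fun r hr => ?_)
    have hr' := hf r (Finset.mem_insert_of_mem hr)
    rw [map_mul] at hr'
    exact (mul_eq_zero.mp hr').resolve_left <| substNeg_Xv_add_Xv_ne_zero
      (hlt p (Finset.mem_insert_self p s)) (hlt r (Finset.mem_insert_of_mem hr))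
      (ne_of_mem_of_not_mem hr hps).symm

end LP

/-- If f is an Sₙ-invariant Laurent polynomial (n ≥ 2) whose
evaluation at x_{n-1} = t, x_n = -t is identically zero, then f is divisible by
∏_{i<j} (x_i + x_j) in the ring of Laurent polynomials. -/
theorem dvd_of_eval_zero (n : ℕ) (hn : 2 ≤ n) (f : LP n)
    (hsymm : IsSymmLP f)
    (hzero : ∀ (t : ℚˣ) (y : Fin n → ℚˣ),
      lpEval (substPair ⟨n - 2, by omega⟩ ⟨n - 1, by omega⟩ t y) f = 0) :
    (∏ p ∈ Finset.univ.filter (fun p : Fin n × Fin n => p.1 < p.2),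
      (Xv p.1 + Xv p.2)) ∣ f := by
  have hab : (⟨n - 2, by omega⟩ : Fin n) ≠ ⟨n - 1, by omega⟩ := by
    simp only [ne_eq, Fin.mk.injEq]
    omega
  refine LP.prod_dvd_of_substNeg_eq_zero _ (fun p hp => (Finset.mem_filter.mp hp).2) fun p hp => ?_
  exact LP.substNeg_eq_zero_of_isSymmLP hsymm hab hzero (Finset.mem_filter.mp hp).2.ne
end

section
/- The evaluation map ev: J_n → J_{n-2} defined by ev(f) = f|_{x_{n-1} = t, x_n = -t} is a well-defined ring homomorphism, i.e., for f ∈ J_n the resulting Laurent polynomial in x_1,...,x_{n-2} again lies in J_{n-2}, and ev respects addition and multiplication. -/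
/-- The point of (ℚˣ)ⁿ whose first n-2 coordinates are y and whose last two
coordinates are t and -t. -/
def embedPt {n : ℕ} (t : ℚˣ) (y : Fin (n - 2) → ℚˣ) : Fin n → ℚˣ :=
  fun i => if h : (i : ℕ) < n - 2 then y ⟨i, h⟩ else if (i : ℕ) = n - 2 then t else -t

section Evaluation

variable {n : ℕ} {R S : Type*} [CommRing R] [Algebra ℚ R] [CommRing S] [Algebra ℚ S]

noncomputable def monomialHom (x : Fin n → Rˣ) : Multiplicative (Fin n →₀ ℤ) →* R where
  toFun d := ∏ i, ((x i ^ d.toAdd i : Rˣ) : R)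
  map_one' := by simp
  map_mul' d e := by
    simp only [toAdd_mul, Finsupp.add_apply, zpow_add, Units.val_mul, Finset.prod_mul_distrib]

noncomputable def evalHom (x : Fin n → Rˣ) : LP n →ₐ[ℚ] R :=
  AddMonoidAlgebra.lift ℚ R _ (monomialHom x)

lemma lpEval_eq_evalHom (x : Fin n → ℚˣ) (f : LP n) : lpEval x f = evalHom x f := by
  simp [lpEval, evalHom, AddMonoidAlgebra.lift_apply', monomialHom]

lemma AlgHom.comp_evalHom (φ : R →ₐ[ℚ] S) (x : Fin n → Rˣ) :
    φ.comp (evalHom x) = evalHom (Units.map φ ∘ x) := by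
  refine AddMonoidAlgebra.algHom_ext (fun d => ?_) (Subsingleton.elim _ _)
  simp only [evalHom, AddMonoidAlgebra.lift_single, AlgHom.comp_apply, one_smul, monomialHom,
    MonoidHom.coe_mk, OneHom.coe_mk, map_prod, Function.comp_apply, ← map_zpow, Units.coe_map]
  rfl

noncomputable def varUnit (i : Fin n) : (LP n)ˣ :=
  Units.map (AddMonoidAlgebra.of ℚ _) (toUnits (Multiplicative.ofAdd (Finsupp.single i 1)))

lemma evalHom_varUnit (x : Fin n → Rˣ) (i : Fin n) : evalHom x (varUnit i : LP n) = x i := by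
  simp [varUnit, evalHom, monomialHom, Finsupp.single_apply, apply_ite Units.val]

end Evaluation

section SubstPair

variable {n : ℕ}

def IndepOfSubstPair (f : LP n) (i j : Fin n) : Prop :=
  ∀ (t t' : ℚˣ) (y : Fin n → ℚˣ),
    lpEval (substPair i j t y) f = lpEval (substPair i j t' y) f

lemma substPair_comp_perm (i j : Fin n) (t : ℚˣ) (x : Fin n → ℚˣ) (σ : Equiv.Perm (Fin n)) :
    substPair i j t x ∘ σ = substPair (σ.symm i) (σ.symm j) t (x ∘ σ) := by
  funext k
  simp only [substPair, Function.comp_apply, Equiv.eq_symm_apply]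

lemma IndepOfSubstPair.perm {f : LP n} (hsym : IsSymmLP f) {i j : Fin n}
    (h : IndepOfSubstPair f i j) (σ : Equiv.Perm (Fin n)) :
    IndepOfSubstPair f (σ i) (σ j) := by
  have hconj : ∀ (t : ℚˣ) (y : Fin n → ℚˣ),
      substPair (σ i) (σ j) t y = substPair i j t (y ∘ σ) ∘ σ.symm := by
    intro t y
    rw [substPair_comp_perm, Equiv.symm_symm, Function.comp_assoc, Equiv.self_comp_symm,
      Function.comp_id]
  intro t t' y
  rw [hconj, hconj, hsym, hsym, h]

lemma Equiv.Perm.exists_apply_eq_pair {α : Type*} [DecidableEq α] {i j k l : α}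
    (hij : i ≠ j) (hkl : k ≠ l) : ∃ σ : Equiv.Perm α, σ i = k ∧ σ j = l := by
  have hj : Equiv.swap i k j ≠ k := by
    simpa only [Equiv.swap_apply_left] using (Equiv.swap i k).injective.ne hij.symm
  refine ⟨Equiv.swap (Equiv.swap i k j) l * Equiv.swap i k, ?_, ?_⟩
  · rw [Equiv.Perm.mul_apply, Equiv.swap_apply_left, Equiv.swap_apply_of_ne_of_ne hj.symm hkl]
  · rw [Equiv.Perm.mul_apply, Equiv.swap_apply_left]

lemma IndepOfSubstPair.of_ne {f : LP n} (hsym : IsSymmLP f) {i j k l : Fin n}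
    (h : IndepOfSubstPair f i j) (hij : i ≠ j) (hkl : k ≠ l) : IndepOfSubstPair f k l := by
  obtain ⟨σ, rfl, rfl⟩ := Equiv.Perm.exists_apply_eq_pair hij hkl
  exact h.perm hsym σ

end SubstPair

section LastPair

variable {n : ℕ}

/-- The substitution `x_{n-1} = 1, x_n = -1` (coordinates `n - 2` and `n - 1` of `Fin n`). -/
noncomputable def specializeLastPair : LP n →ₐ[ℚ] LP (n - 2) :=
  evalHom fun i =>
    if h : (i : ℕ) < n - 2 then varUnit ⟨i, h⟩ else if (i : ℕ) = n - 2 then 1 else -1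

lemma lpEval_specializeLastPair (y : Fin (n - 2) → ℚˣ) (f : LP n) :
    lpEval y (specializeLastPair f) = lpEval (embedPt 1 y) f := by
  rw [lpEval_eq_evalHom, lpEval_eq_evalHom, specializeLastPair, ← AlgHom.comp_apply,
    AlgHom.comp_evalHom]
  congr 2
  funext i
  simp only [Function.comp_apply, embedPt]
  split_ifs <;> ext <;> simp [evalHom_varUnit]

lemma embedPt_comp_perm (t : ℚˣ) (y : Fin (n - 2) → ℚˣ) (σ : Equiv.Perm (Fin (n - 2))) :
    embedPt t (y ∘ σ) = embedPt t y ∘ σ.extendDomain (Fin.castLEquiv (Nat.sub_le n 2)) := by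
  funext k
  by_cases h : (k : ℕ) < n - 2
  · simp [embedPt, h, Equiv.Perm.extendDomain_apply_subtype]
  · simp [embedPt, h, Equiv.Perm.extendDomain_apply_not_subtype]

lemma embedPt_substPair (i j : Fin (n - 2)) (s t : ℚˣ) (y : Fin (n - 2) → ℚˣ) :
    embedPt s (substPair i j t y) =
      substPair (Fin.castLE (Nat.sub_le n 2) i) (Fin.castLE (Nat.sub_le n 2) j) t
        (embedPt s y) := by
  funext k
  simp only [embedPt, substPair, Fin.ext_iff, Fin.val_castLE]
  split_ifs <;> first | rfl | omega

lemma substPair_embedPt (hn : 2 ≤ n) (s t : ℚˣ) (y : Fin (n - 2) → ℚˣ) :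
    substPair ⟨n - 2, by omega⟩ ⟨n - 1, by omega⟩ t (embedPt s y) = embedPt t y := by
  funext k
  simp only [embedPt, substPair, Fin.ext_iff]
  split_ifs <;> first | rfl | omega

lemma IsSymmLP.specializeLastPair {f : LP n} (hsym : IsSymmLP f) :
    IsSymmLP (specializeLastPair f) := by
  intro σ y
  rw [lpEval_specializeLastPair, lpEval_specializeLastPair, embedPt_comp_perm, hsym]

lemma IndepOfSubstPair.specializeLastPair {f : LP n} {i j : Fin (n - 2)}
    (h : IndepOfSubstPair f (Fin.castLE (Nat.sub_le n 2) i) (Fin.castLE (Nat.sub_le n 2) j)) :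
    IndepOfSubstPair (specializeLastPair f) i j := by
  intro t t' y
  rw [lpEval_specializeLastPair, lpEval_specializeLastPair, embedPt_substPair, embedPt_substPair]
  exact h t t' _

lemma IndepOfSubstPair.lpEval_embedPt_eq {f : LP n} (hn : 2 ≤ n)
    (h : IndepOfSubstPair f ⟨n - 2, by omega⟩ ⟨n - 1, by omega⟩)
    (s t : ℚˣ) (y : Fin (n - 2) → ℚˣ) :
    lpEval (embedPt s y) f = lpEval (embedPt t y) f := by
  simpa only [substPair_embedPt hn] using h s t (embedPt 1 y)

end LastPair

/-- For n ≥ 4, the evaluation map ev : J_n → J_{n-2},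
ev(f) = f|_{x_{n-1}=t, x_n=-t}, is well defined (the result lies again in
J_{n-2}) and respects addition, multiplication and 1.  Here "ev(f) = g" is
expressed by the correspondence `Corr f g`: for all t and y, evaluating f at
(y, t, -t) gives the value of g at y. -/
theorem ev_well_defined_ring_hom (n : ℕ) (hn : 4 ≤ n) :
    let Jn : Set (LP n) := { f | IsSymmLP f ∧
      ∀ (t t' : ℚˣ) (y : Fin n → ℚˣ),
        lpEval (substPair ⟨0, by omega⟩ ⟨1, by omega⟩ t y) f =
        lpEval (substPair ⟨0, by omega⟩ ⟨1, by omega⟩ t' y) f }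
    let Jm : Set (LP (n - 2)) := { g | IsSymmLP g ∧
      ∀ (t t' : ℚˣ) (y : Fin (n - 2) → ℚˣ),
        lpEval (substPair ⟨0, by omega⟩ ⟨1, by omega⟩ t y) g =
        lpEval (substPair ⟨0, by omega⟩ ⟨1, by omega⟩ t' y) g }
    let Corr : LP n → LP (n - 2) → Prop := fun f g =>
      ∀ (t : ℚˣ) (y : Fin (n - 2) → ℚˣ), lpEval (embedPt t y) f = lpEval y g
    (∀ f ∈ Jn, ∃ g ∈ Jm, Corr f g) ∧
    (∀ f₁ f₂ g₁ g₂, Corr f₁ g₁ → Corr f₂ g₂ →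
      Corr (f₁ + f₂) (g₁ + g₂) ∧ Corr (f₁ * f₂) (g₁ * g₂)) ∧
    Corr 1 1 := by
  intro Jn Jm Corr
  refine ⟨?_, fun f₁ f₂ g₁ g₂ h₁ h₂ => ⟨fun t y => ?_, fun t y => ?_⟩, fun t y => ?_⟩
  · rintro f ⟨hsym, hfirst : IndepOfSubstPair f _ _⟩
    have hlast : IndepOfSubstPair f ⟨n - 2, by omega⟩ ⟨n - 1, by omega⟩ :=
      hfirst.of_ne hsym (by simp [Fin.ext_iff]) (by simp [Fin.ext_iff]; omega)
    refine ⟨specializeLastPair f, ⟨hsym.specializeLastPair, ?_⟩, fun t y => ?_⟩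
    · exact hfirst.specializeLastPair (i := ⟨0, by omega⟩) (j := ⟨1, by omega⟩)
    · rw [lpEval_specializeLastPair, hlast.lpEval_embedPt_eq (by omega) t 1]
  all_goals simp only [Corr, lpEval_eq_evalHom] at *
  · rw [map_add, map_add, h₁, h₂]
  · rw [map_mul, map_mul, h₁, h₂]
  · rw [map_one, map_one]
end

section
/- Let λ ∈ Z^n be a weight with λ_1 ≥ ... ≥ λ_n and such that λ_i = λ_{i+1} implies λ_i = 0 (a strict partition with possible zeros). The Schur P-function p_{λ,n} = Σ_{w ∈ S_n/S_λ} w( x^λ ∏_{i<j, λ_i>λ_j} (1 + x_i^{-1}x_j)/(1 - x_i^{-1}x_j) ), where S_λ is the stabilizer of λ, is an S_n-invariant Laurent polynomial (in particular, all the denominators cancel). -/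
/-- The value at x of the defining rational expression of the Schur P-function
p_{λ,n} = Σ_{w ∈ Sₙ/S_λ} w( x^λ ∏_{i<j, λᵢ>λⱼ} (1+xᵢ⁻¹xⱼ)/(1-xᵢ⁻¹xⱼ) ).
Since the summand depends only on the coset w·S_λ, the sum over coset
representatives equals the sum over all of Sₙ divided by |S_λ|. -/
noncomputable def schurPVal (n : ℕ) (lam : Fin n → ℤ) (x : Fin n → ℚˣ) : ℚ :=
  ((Fintype.card {σ : Equiv.Perm (Fin n) // ∀ i, lam (σ i) = lam i} : ℚ))⁻¹ *
  ∑ σ : Equiv.Perm (Fin n),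
    (∏ i, ((x (σ i) ^ (lam i) : ℚˣ) : ℚ)) *
    ∏ p ∈ Finset.univ.filter
        (fun p : Fin n × Fin n => p.1 < p.2 ∧ lam p.2 < lam p.1),
      (1 + ((x (σ p.1) : ℚ))⁻¹ * (x (σ p.2) : ℚ)) /
      (1 - ((x (σ p.1) : ℚ))⁻¹ * (x (σ p.2) : ℚ))

/-!
Since `(1 + xᵢ⁻¹xⱼ)/(1 - xᵢ⁻¹xⱼ) = (xᵢ + xⱼ)/(xᵢ - xⱼ)`, multiplying the summand by the
Vandermonde product `Δ = ∏_{i<j} (xᵢ - xⱼ)` gives the Laurent polynomial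
`G = x^λ ∏_{i<j, λᵢ>λⱼ} (xᵢ + xⱼ) ∏_{other i<j} (xᵢ - xⱼ)`; after a shift by a power of
`x₁⋯xₙ` it is a polynomial. As `Δ` is alternating, `Δ · Σ_w w(G / Δ) = Σ_w sign(w) w(G)`.
An alternating polynomial vanishes on `xᵢ = xⱼ`, so it is divisible by each of the pairwise
non-associated primes `xᵢ - xⱼ`, hence by `Δ`, and the quotient is symmetric.
-/

open Finset Equiv MvPolynomial

theorem Finset.prod_filter_fst_lt_snd {n : ℕ} {M : Type*} [CommMonoid M] (f : Fin n × Fin n → M) :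
    ∏ p ∈ univ.filter (fun p : Fin n × Fin n => p.1 < p.2), f p = ∏ i, ∏ j ∈ Ioi i, f (i, j) := by
  rw [prod_filter, Fintype.prod_prod_type]
  refine prod_congr rfl fun i _ => ?_
  rw [← prod_filter]
  congr 1
  ext j
  simp

def vandermondeProd {A : Type*} [CommRing A] {n : ℕ} (v : Fin n → A) : A :=
  ∏ p ∈ univ.filter (fun p : Fin n × Fin n => p.1 < p.2), (v p.1 - v p.2)

section Vandermonde

variable {A B : Type*} [CommRing A] [CommRing B] {n : ℕ}

theorem vandermondeProd_eq_det (v : Fin n → A) :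
    vandermondeProd v = (Matrix.vandermonde (-v)).det := by
  rw [Matrix.det_vandermonde, vandermondeProd, prod_filter_fst_lt_snd]
  simp only [Pi.neg_apply, neg_sub_neg]

theorem vandermondeProd_comp_perm (v : Fin n → A) (σ : Perm (Fin n)) :
    vandermondeProd (v ∘ σ) = Perm.sign σ • vandermondeProd v := by
  rw [vandermondeProd_eq_det, vandermondeProd_eq_det, Units.smul_def, zsmul_eq_mul,
    ← Matrix.det_permute]
  rfl

theorem map_vandermondeProd {F : Type*} [FunLike F A B] [RingHomClass F A B] (f : F)
    (v : Fin n → A) : f (vandermondeProd v) = vandermondeProd (f ∘ v) := by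
  simp [vandermondeProd, map_prod]

theorem vandermondeProd_ne_zero_iff [IsDomain A] {v : Fin n → A} :
    vandermondeProd v ≠ 0 ↔ Function.Injective v := by
  rw [vandermondeProd_eq_det, Matrix.det_vandermonde_ne_zero_iff]
  exact neg_injective.of_comp_iff v

end Vandermonde

theorem Finset.prod_dvd_of_prime {ι M : Type*} [CommMonoidWithZero M] [IsCancelMulZero M]
    {s : Finset ι} {f : ι → M} {a : M} (hprime : ∀ i ∈ s, Prime (f i))
    (hdvd : ∀ i ∈ s, f i ∣ a) (hinj : ∀ i ∈ s, ∀ j ∈ s, f i ∣ f j → i = j) :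
    ∏ i ∈ s, f i ∣ a := by
  classical
  rw [prod_eq_multiset_prod]
  refine Multiset.prod_primes_dvd a (by simpa using hprime) (by simpa using hdvd) fun b => ?_
  rw [Multiset.countP_map, ← Finset.filter_val, Finset.card_val, Finset.card_le_one]
  intro i hi j hj
  simp only [mem_filter] at hi hj
  exact hinj i hi.1 j hj.1 (hi.2.symm.trans hj.2).dvd

namespace MvPolynomial

variable {ι R : Type*} [CommRing R]

def IsAlternating [DecidableEq ι] [Fintype ι] (P : MvPolynomial ι R) : Prop :=
  ∀ σ : Perm ι, rename σ P = Perm.sign σ • P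

noncomputable def alternatization [DecidableEq ι] [Fintype ι] (P : MvPolynomial ι R) :
    MvPolynomial ι R :=
  ∑ σ : Perm ι, Perm.sign σ • rename σ P

theorem isAlternating_alternatization [DecidableEq ι] [Fintype ι] (P : MvPolynomial ι R) :
    (alternatization P).IsAlternating := by
  intro τ
  rw [alternatization, map_sum, smul_sum]
  refine Fintype.sum_equiv (Equiv.mulLeft τ) _ _ fun σ => ?_
  rw [map_zsmul_unit, rename_rename, smul_smul, ← Perm.coe_mul, coe_mulLeft, Perm.sign_mul,
    ← mul_assoc, Int.units_mul_self, one_mul]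

theorem aeval_alternatization {S : Type*} [CommRing S] [Algebra R S] [DecidableEq ι] [Fintype ι]
    (x : ι → S) (P : MvPolynomial ι R) :
    aeval x (alternatization P) = ∑ σ : Perm ι, Perm.sign σ • aeval (x ∘ σ) P := by
  simp [alternatization, aeval_rename, map_zsmul_unit]

theorem sub_dvd_sub_rename_update [DecidableEq ι] (i j : ι) (P : MvPolynomial ι R) :
    X i - X j ∣ P - rename (Function.update id i j) P := by
  induction P using MvPolynomial.induction_on with
  | C r => simp
  | add p q hp hq =>
    rw [map_add, add_sub_add_comm]
    exact dvd_add hp hq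
  | mul_X p k hp =>
    rw [map_mul, rename_X]
    have h : p * X k - rename (Function.update id i j) p * X (Function.update id i j k) =
        (p - rename (Function.update id i j) p) * X k +
          rename (Function.update id i j) p * (X k - X (Function.update id i j k)) := by ring
    rw [h]
    refine dvd_add (hp.mul_right _) (Dvd.dvd.mul_left ?_ _)
    rcases eq_or_ne k i with rfl | hki
    · simp
    · simp [hki]

theorem IsAlternating.rename_update_eq_zero [DecidableEq ι] [Fintype ι] [IsDomain R]
    [NeZero (2 : R)] {P : MvPolynomial ι R} (hP : P.IsAlternating) {i j : ι} (hij : i ≠ j) :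
    rename (Function.update id i j) P = 0 := by
  have hswap : Function.update id i j ∘ swap i j = Function.update id i j := by
    ext k : 1
    rcases eq_or_ne k i with rfl | hki
    · simp [hij.symm]
    rcases eq_or_ne k j with rfl | hkj
    · simp [hki]
    · simp [swap_apply_of_ne_of_ne hki hkj, hki]
  -- the substitution `xᵢ := xⱼ` absorbs the transposition `(i j)`, which negates `P`
  have h := congrArg (rename (Function.update id i j)) (hP (swap i j))
  rw [rename_rename, hswap, Perm.sign_swap hij, map_zsmul_unit, Units.neg_smul, one_smul,
    eq_neg_iff_add_eq_zero, ← two_smul R] at h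
  exact (smul_eq_zero.mp h).resolve_left two_ne_zero

theorem prime_X_sub_X [IsDomain R] [DecidableEq ι] {i j : ι} (hij : i ≠ j) :
    Prime (X i - X j : MvPolynomial ι R) := by
  let e : MvPolynomial ι R ≃ₐ[R] MvPolynomial ι R :=
    AlgEquiv.ofAlgHom (aeval (Function.update X i (X i - X j)))
      (aeval (Function.update X i (X i + X j)))
      (algHom_ext fun k => by
        rcases eq_or_ne k i with rfl | hk <;> simp [*, Ne.symm hij])
      (algHom_ext fun k => by
        rcases eq_or_ne k i with rfl | hk <;> simp [*, Ne.symm hij])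
  have he : e (X i) = X i - X j := by simp [e]
  exact he ▸ (MulEquiv.prime_iff e.toMulEquiv).mpr X_prime

theorem eq_of_X_sub_X_dvd [Nontrivial R] [LinearOrder ι] {i j k l : ι} (hij : i < j)
    (hkl : k < l) (h : (X i - X j : MvPolynomial ι R) ∣ X k - X l) : i = k ∧ j = l := by
  -- the substitution `xᵢ := xⱼ` kills `xᵢ - xⱼ`, hence `xₖ - xₗ`
  have h1 : rename (Function.update id i j) (X i - X j : MvPolynomial ι R) = 0 := by
    simp [Function.update_of_ne hij.ne']
  obtain ⟨c, hc⟩ := h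
  have h2 := congrArg (rename (Function.update id i j)) hc
  rw [map_mul, h1, zero_mul, map_sub, rename_X, rename_X, sub_eq_zero] at h2
  have h3 := X_injective h2
  rcases eq_or_ne k i with rfl | hki
  · simp [Function.update_of_ne hkl.ne'] at h3
    exact ⟨rfl, h3⟩
  · rcases eq_or_ne l i with rfl | hli
    · simp [hki] at h3; order
    · simp [hki, hli] at h3; order

theorem IsAlternating.X_sub_X_dvd [DecidableEq ι] [Fintype ι] [IsDomain R] [NeZero (2 : R)]
    {P : MvPolynomial ι R} (hP : P.IsAlternating) {i j : ι} (hij : i ≠ j) : X i - X j ∣ P := by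
  simpa [hP.rename_update_eq_zero hij] using sub_dvd_sub_rename_update i j P

theorem IsAlternating.vandermondeProd_X_dvd {n : ℕ} [IsDomain R] [NeZero (2 : R)]
    {P : MvPolynomial (Fin n) R} (hP : P.IsAlternating) : vandermondeProd X ∣ P :=
  prod_dvd_of_prime (fun p hp => prime_X_sub_X (mem_filter.mp hp).2.ne)
    (fun p hp => hP.X_sub_X_dvd (mem_filter.mp hp).2.ne) fun p hp q hq h => by
      obtain ⟨h1, h2⟩ := eq_of_X_sub_X_dvd (mem_filter.mp hp).2 (mem_filter.mp hq).2 h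
      exact Prod.ext h1 h2

theorem isAlternating_vandermondeProd_X {n : ℕ} :
    (vandermondeProd X : MvPolynomial (Fin n) R).IsAlternating := by
  intro σ
  rw [map_vandermondeProd, ← vandermondeProd_comp_perm]
  congr 1
  ext i : 1
  simp

theorem IsAlternating.isSymmetric_of_mul [DecidableEq ι] [Fintype ι] [IsDomain R]
    {A Q : MvPolynomial ι R} (hA : A.IsAlternating) (hA0 : A ≠ 0)
    (hAQ : (A * Q).IsAlternating) : Q.IsSymmetric := by
  intro σ
  have h := hAQ σ
  rw [map_mul, hA σ, smul_mul_assoc, smul_left_cancel_iff] at h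
  exact mul_left_cancel₀ hA0 h

end MvPolynomial

section Laurent

variable {n : ℕ}

noncomputable def lpEvalHom (x : Fin n → ℚˣ) : LP n →ₐ[ℚ] ℚ :=
  AddMonoidAlgebra.lift ℚ ℚ (Fin n →₀ ℤ)
    { toFun d := ∏ i, ((x i ^ d.toAdd i : ℚˣ) : ℚ)
      map_one' := by simp
      map_mul' d e := by
        simp only [toAdd_mul, Finsupp.add_apply, zpow_add, Units.val_mul, prod_mul_distrib] }

theorem lpEvalHom_apply (x : Fin n → ℚˣ) (f : LP n) : lpEvalHom x f = lpEval x f := by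
  rw [lpEvalHom, AddMonoidAlgebra.lift_apply, lpEval]
  rfl

theorem lpEval_mul (x : Fin n → ℚˣ) (f g : LP n) :
    lpEval x (f * g) = lpEval x f * lpEval x g := by
  simp only [← lpEvalHom_apply, map_mul]

theorem lpEval_single (x : Fin n → ℚˣ) (d : Fin n →₀ ℤ) (c : ℚ) :
    lpEval x (AddMonoidAlgebra.single d c) = c * ∏ i, ((x i ^ d i : ℚˣ) : ℚ) := by
  rw [lpEval, AddMonoidAlgebra.coeff_single]
  exact Finsupp.sum_single_index (zero_mul _)

noncomputable def toLP : MvPolynomial (Fin n) ℚ →ₐ[ℚ] LP n := aeval Xv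

theorem lpEval_toLP (x : Fin n → ℚˣ) (P : MvPolynomial (Fin n) ℚ) :
    lpEval x (toLP P) = aeval (fun i => (x i : ℚ)) P := by
  rw [← lpEvalHom_apply, ← AlgHom.comp_apply, toLP, comp_aeval]
  congr 2
  ext i
  rw [lpEvalHom_apply, Xv, lpEval_single, one_mul,
    prod_eq_single i (fun j _ hj => by simp [Finsupp.single_eq_of_ne hj]) (by simp)]
  simp

end Laurent

section SchurP

variable {n : ℕ} (lam : Fin n → ℤ)

def schurPShift : ℕ := ∑ i, (lam i).natAbs

theorem toNat_add_schurPShift (i : Fin n) :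
    ((lam i + schurPShift lam).toNat : ℤ) = lam i + schurPShift lam := by
  refine Int.toNat_of_nonneg ?_
  have : (lam i).natAbs ≤ schurPShift lam :=
    single_le_sum (f := fun j => (lam j).natAbs) (fun _ _ => Nat.zero_le _) (mem_univ i)
  omega

def strictPairs : Finset (Fin n × Fin n) :=
  univ.filter fun p : Fin n × Fin n => p.1 < p.2 ∧ lam p.2 < lam p.1

noncomputable def schurPNumerator : MvPolynomial (Fin n) ℚ :=
  (∏ i, X i ^ (lam i + schurPShift lam).toNat) * (∏ p ∈ strictPairs lam, (X p.1 + X p.2)) *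
    ∏ p ∈ univ.filter (fun p : Fin n × Fin n => p.1 < p.2 ∧ ¬ lam p.2 < lam p.1), (X p.1 - X p.2)

noncomputable def schurPSummand (y : Fin n → ℚ) : ℚ :=
  (∏ i, y i ^ (lam i + schurPShift lam).toNat) *
    ∏ p ∈ strictPairs lam, (y p.1 + y p.2) / (y p.1 - y p.2)

theorem aeval_schurPNumerator {y : Fin n → ℚ} (hy : Function.Injective y) :
    aeval y (schurPNumerator lam) = vandermondeProd y * schurPSummand lam y := by
  have hsplit : vandermondeProd y = (∏ p ∈ strictPairs lam, (y p.1 - y p.2)) *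
      ∏ p ∈ univ.filter (fun p : Fin n × Fin n => p.1 < p.2 ∧ ¬ lam p.2 < lam p.1),
        (y p.1 - y p.2) := by
    rw [vandermondeProd, ← prod_filter_mul_prod_filter_not _ fun p => lam p.2 < lam p.1,
      strictPairs, filter_filter, filter_filter]
  have hplus : ∏ p ∈ strictPairs lam, (y p.1 + y p.2) = (∏ p ∈ strictPairs lam, (y p.1 - y p.2)) *
      ∏ p ∈ strictPairs lam, (y p.1 + y p.2) / (y p.1 - y p.2) := by
    rw [← prod_mul_distrib]
    refine prod_congr rfl fun p hp => (mul_div_cancel₀ _ ?_).symm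
    exact sub_ne_zero.mpr (hy.ne (mem_filter.mp hp).2.1.ne)
  simp only [schurPNumerator, schurPSummand, map_mul, map_prod, map_pow, map_add, map_sub,
    aeval_X, hsplit, hplus]
  ring

theorem aeval_alternatization_schurPNumerator {x : Fin n → ℚ} (hx : Function.Injective x) :
    aeval x (alternatization (schurPNumerator lam)) =
      vandermondeProd x * ∑ σ : Perm (Fin n), schurPSummand lam (x ∘ σ) := by
  rw [aeval_alternatization, mul_sum]
  refine sum_congr rfl fun σ _ => ?_
  rw [aeval_schurPNumerator lam (hx.comp σ.injective), vandermondeProd_comp_perm, smul_mul_assoc,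
    smul_smul, Int.units_mul_self, one_smul]

theorem vandermondeProd_X_dvd_alternatization_schurPNumerator :
    vandermondeProd X ∣ alternatization (schurPNumerator lam) :=
  (isAlternating_alternatization _).vandermondeProd_X_dvd

noncomputable def schurPPoly : MvPolynomial (Fin n) ℚ :=
  (vandermondeProd_X_dvd_alternatization_schurPNumerator lam).choose

theorem vandermondeProd_X_mul_schurPPoly :
    vandermondeProd X * schurPPoly lam = alternatization (schurPNumerator lam) :=
  (vandermondeProd_X_dvd_alternatization_schurPNumerator lam).choose_spec.symm

theorem isSymmetric_schurPPoly : (schurPPoly lam).IsSymmetric :=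
  isAlternating_vandermondeProd_X.isSymmetric_of_mul
    (vandermondeProd_ne_zero_iff.mpr X_injective)
    (vandermondeProd_X_mul_schurPPoly lam ▸ isAlternating_alternatization _)

theorem aeval_schurPPoly {x : Fin n → ℚ} (hx : Function.Injective x) :
    aeval x (schurPPoly lam) = ∑ σ : Perm (Fin n), schurPSummand lam (x ∘ σ) := by
  have h := congrArg (aeval x) (vandermondeProd_X_mul_schurPPoly lam)
  have hX : (aeval (R := ℚ) x ∘ X : Fin n → ℚ) = x := funext (aeval_X x)
  rw [map_mul, map_vandermondeProd, hX, aeval_alternatization_schurPNumerator lam hx] at h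
  exact mul_left_cancel₀ (vandermondeProd_ne_zero_iff.mpr hx) h

end SchurP

section SchurPLaurent

variable {n : ℕ} (lam : Fin n → ℤ)

noncomputable def schurPLaurent : LP n :=
  (Fintype.card {σ : Perm (Fin n) // ∀ i, lam (σ i) = lam i} : ℚ)⁻¹ •
    (toLP (schurPPoly lam) *
      AddMonoidAlgebra.single (Finsupp.equivFunOnFinite.symm fun _ => -(schurPShift lam : ℤ)) 1)

theorem lpEval_schurPLaurent (x : Fin n → ℚˣ) :
    lpEval x (schurPLaurent lam) =
      (Fintype.card {σ : Perm (Fin n) // ∀ i, lam (σ i) = lam i} : ℚ)⁻¹ *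
        (aeval (fun i => (x i : ℚ)) (schurPPoly lam) *
          ∏ i, ((x i ^ (-(schurPShift lam : ℤ)) : ℚˣ) : ℚ)) := by
  rw [schurPLaurent, ← lpEvalHom_apply, map_smul, lpEvalHom_apply, lpEval_mul, lpEval_toLP,
    lpEval_single, one_mul, smul_eq_mul]
  rfl

theorem isSymmLP_schurPLaurent : IsSymmLP (schurPLaurent lam) := by
  intro σ x
  rw [lpEval_schurPLaurent, lpEval_schurPLaurent]
  congr 2
  · have h := aeval_rename (R := ℚ) σ (fun i => (x i : ℚ)) (schurPPoly lam)
    rw [isSymmetric_schurPPoly lam σ] at h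
    exact h.symm
  · exact Equiv.prod_comp σ fun i => ((x i ^ (-(schurPShift lam : ℤ)) : ℚˣ) : ℚ)

theorem schurPSummand_mul_prod_zpow (x : Fin n → ℚˣ) :
    schurPSummand lam (fun i => (x i : ℚ)) * ∏ i, ((x i ^ (-(schurPShift lam : ℤ)) : ℚˣ) : ℚ) =
      (∏ i, ((x i ^ lam i : ℚˣ) : ℚ)) *
        ∏ p ∈ strictPairs lam, (1 + (x p.1 : ℚ)⁻¹ * x p.2) / (1 - (x p.1 : ℚ)⁻¹ * x p.2) := by
  have hmonomial : ∀ i, (x i : ℚ) ^ (lam i + schurPShift lam).toNat *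
      ((x i ^ (-(schurPShift lam : ℤ)) : ℚˣ) : ℚ) = ((x i ^ lam i : ℚˣ) : ℚ) := fun i => by
    rw [← Units.val_pow_eq_pow_val, ← Units.val_mul, ← zpow_natCast, ← zpow_add,
      toNat_add_schurPShift, add_neg_cancel_right]
  have hpair : ∀ a b : ℚˣ, ((a : ℚ) + b) / (a - b) = (1 + (a : ℚ)⁻¹ * b) / (1 - (a : ℚ)⁻¹ * b) :=
    fun a b => by
      rw [← mul_div_mul_left _ _ (inv_ne_zero a.ne_zero), mul_add, mul_sub,
        inv_mul_cancel₀ a.ne_zero]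
  rw [schurPSummand, mul_right_comm, ← prod_mul_distrib]
  simp only [hmonomial, hpair]

theorem lpEval_schurPLaurent_eq_schurPVal (x : Fin n → ℚˣ)
    (hx : Function.Injective fun i => (x i : ℚ)) :
    lpEval x (schurPLaurent lam) = schurPVal n lam x := by
  rw [lpEval_schurPLaurent, aeval_schurPPoly lam hx, schurPVal, sum_mul]
  congr 1
  refine sum_congr rfl fun σ _ => ?_
  rw [← Equiv.prod_comp σ fun i => ((x i ^ (-(schurPShift lam : ℤ)) : ℚˣ) : ℚ)]
  exact schurPSummand_mul_prod_zpow lam (x ∘ σ)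

end SchurPLaurent

theorem schurP_is_symmetric_laurent_general (n : ℕ) (lam : Fin n → ℤ) :
    ∃ p : LP n, IsSymmLP p ∧
      ∀ x : Fin n → ℚˣ, (∀ i j : Fin n, i ≠ j → (x i : ℚ) ≠ (x j : ℚ)) →
        lpEval x p = schurPVal n lam x :=
  ⟨schurPLaurent lam, isSymmLP_schurPLaurent lam, fun x hx =>
    lpEval_schurPLaurent_eq_schurPVal lam x fun i j hij => not_imp_not.mp (hx i j) hij⟩

/-- For λ ∈ ℤⁿ weakly decreasing with λᵢ = λⱼ (i<j) forcing
λᵢ = 0, the Schur P-function p_{λ,n} is an Sₙ-invariant Laurent polynomial: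
there is a symmetric Laurent polynomial whose values agree with the defining
rational expression wherever the denominators do not vanish (all coordinates
distinct); in particular all denominators cancel. -/
theorem schurP_is_symmetric_laurent (n : ℕ) (lam : Fin n → ℤ)
    (hdec : ∀ i j : Fin n, i ≤ j → lam j ≤ lam i)
    (hstrict : ∀ i j : Fin n, i < j → lam i = lam j → lam i = 0) :
    ∃ p : LP n, IsSymmLP p ∧
      ∀ x : Fin n → ℚˣ, (∀ i j : Fin n, i ≠ j → (x i : ℚ) ≠ (x j : ℚ)) →
        lpEval x p = schurPVal n lam x :=
  schurP_is_symmetric_laurent_general n lam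
end
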